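/- arXiv:2510.00214 — 3 statements merged into one kernel-verified Lean document; each statement's English description precedes it below -/
import Mathlib

section
/- There exists a universal constant C such that for all x, z in [0,1], ∫₀^∞ ∫₀¹ |G_s(x,y) - G_s(z,y)|² dy ds ≤ C |x - z|. -/
/-!
Write `φₙ(x) = sin((n+1)πx)` and `λₙ = (n+1)²π²`. For `s > 0` the difference
`G_s(x,·) - G_s(z,·)` has sine coefficients `2(φₙ(x) - φₙ(z)) e^{-λₙ s/2}`, so by
orthogonality of the `φₙ` on `[0,1]` its squared `L²` norm is `∑ 2(φₙ(x) - φₙ(z))² e^{-λₙ s}`,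
and integrating in `s` gives `∑ 2(φₙ(x) - φₙ(z))² / λₙ`. Since `sin` is `1`-Lipschitz and
bounded, the `n`-th term is at most `2 min(|x - z|², (n+1)⁻²)`; summing the first bound below
`n ≈ 1/|x - z|` and the second above gives `O(|x - z|)`.
-/

open Real MeasureTheory Set Filter

noncomputable section

/-- The Dirichlet heat kernel on [0,1]. -/
def G (t x y : ℝ) : ℝ :=
  2 * ∑' n : ℕ, Real.sin (((n : ℝ) + 1) * Real.pi * x) *
      Real.sin (((n : ℝ) + 1) * Real.pi * y) *
      Real.exp (-(((n : ℝ) + 1) ^ 2) * Real.pi ^ 2 * t / 2)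

section Orthogonal

variable {a b B k : ℝ} {φ : ℕ → ℝ → ℝ} {c : ℕ → ℝ}

lemma norm_mul_le_abs_mul (hφB : ∀ n y, |φ n y| ≤ B) (n : ℕ) (y : ℝ) :
    ‖c n * φ n y‖ ≤ |c n| * B := by
  rw [Real.norm_eq_abs, abs_mul]
  exact mul_le_mul_of_nonneg_left (hφB n y) (abs_nonneg _)

lemma summable_mul_of_summable_abs (hφB : ∀ n y, |φ n y| ≤ B) (hc : Summable fun n => |c n|)
    (y : ℝ) : Summable fun n => c n * φ n y :=
  Summable.of_norm_bounded (hc.mul_right B) (norm_mul_le_abs_mul hφB · y)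

lemma hasSum_intervalIntegral_tsum_mul (hφ : ∀ n, Continuous (φ n))
    (hφB : ∀ n y, |φ n y| ≤ B) (hc : Summable fun n => |c n|) {g : ℝ → ℝ} {M : ℝ}
    (hg : Continuous g) (hgM : ∀ y, |g y| ≤ M) :
    HasSum (fun n => c n * ∫ y in a..b, φ n y * g y)
      (∫ y in a..b, (∑' n, c n * φ n y) * g y) := by
  have hB : 0 ≤ B := (abs_nonneg _).trans (hφB 0 0)
  simp_rw [← intervalIntegral.integral_const_mul, ← mul_assoc]
  refine intervalIntegral.hasSum_integral_of_dominated_convergence (fun n _ => |c n| * B * M)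
    (fun n => ((continuous_const.mul (hφ n)).mul hg).aestronglyMeasurable)
    (fun n => ae_of_all _ fun y _ => ?_) (ae_of_all _ fun _ _ => (hc.mul_right B).mul_right M)
    intervalIntegrable_const
    (ae_of_all _ fun y _ => (summable_mul_of_summable_abs hφB hc y).hasSum.mul_right (g y))
  rw [Real.norm_eq_abs, abs_mul, abs_mul]
  gcongr
  exacts [hφB n y, hgM y]

lemma intervalIntegral_tsum_sq_of_orthogonal (hφ : ∀ n, Continuous (φ n))
    (hφB : ∀ n y, |φ n y| ≤ B)
    (horth : ∀ n m, ∫ y in a..b, φ n y * φ m y = if n = m then k else 0)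
    (hc : Summable fun n => |c n|) :
    ∫ y in a..b, (∑' n, c n * φ n y) ^ 2 = k * ∑' n, c n ^ 2 := by
  set f := fun y => ∑' n, c n * φ n y
  have hf : Continuous f := continuous_tsum (fun n => continuous_const.mul (hφ n))
    (hc.mul_right B) (norm_mul_le_abs_mul hφB)
  have hfM : ∀ y, |f y| ≤ ∑' n, |c n| * B := fun y =>
    (norm_tsum_le_tsum_norm (summable_mul_of_summable_abs hφB hc y).norm).trans
      ((summable_mul_of_summable_abs hφB hc y).norm.tsum_le_tsum (norm_mul_le_abs_mul hφB · y)
        (hc.mul_right B))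
  have hcoef : ∀ n, ∫ y in a..b, φ n y * f y = k * c n := by
    intro n
    have hn := hasSum_intervalIntegral_tsum_mul (a := a) (b := b) hφ hφB hc (hφ n) (hφB n)
    simp_rw [horth] at hn
    have := hn.unique (hasSum_single n fun m hm => by simp [hm])
    calc ∫ y in a..b, φ n y * f y = ∫ y in a..b, f y * φ n y := by simp only [mul_comm]
      _ = c n * if n = n then k else 0 := this
      _ = k * c n := by rw [if_pos rfl, mul_comm]
  have hsq := hasSum_intervalIntegral_tsum_mul (a := a) (b := b) hφ hφB hc hf hfM
  simp_rw [hcoef] at hsq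
  calc ∫ y in a..b, f y ^ 2 = ∫ y in a..b, f y * f y := by simp_rw [sq]
    _ = ∑' n, c n * (k * c n) := hsq.tsum_eq.symm
    _ = k * ∑' n, c n ^ 2 := by rw [← tsum_mul_left]; congr 1; ext n; ring

end Orthogonal

lemma integral_Ioi_tsum_mul_exp_neg {w μ : ℕ → ℝ} (hw : ∀ n, 0 ≤ w n) (hμ : ∀ n, 0 < μ n)
    (hsum : Summable fun n => w n / μ n) :
    ∫ s in Ioi 0, ∑' n, w n * exp (-μ n * s) = ∑' n, w n / μ n := by
  have hint : ∀ n, ∫ s in Ioi 0, w n * exp (-μ n * s) = w n / μ n := fun n => by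
    rw [integral_const_mul, integral_exp_mul_Ioi (neg_lt_zero.mpr (hμ n))]
    simp [div_eq_mul_inv]
  have hnorm : ∀ n s, ‖w n * exp (-μ n * s)‖ = w n * exp (-μ n * s) := fun n s =>
    Real.norm_of_nonneg (mul_nonneg (hw n) (exp_nonneg _))
  refine ((hasSum_integral_of_summable_integral_norm
    (fun n => (exp_neg_integrableOn_Ioi 0 (hμ n)).const_mul (w n)) ?_).tsum_eq.symm).trans
    (tsum_congr hint)
  simpa only [hnorm, hint] using hsum

lemma summable_inv_add_one_sq : Summable fun n : ℕ => (((n : ℝ) + 1) ^ 2)⁻¹ := by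
  simpa using (summable_nat_add_iff 1).mpr (Real.summable_nat_pow_inv.mpr one_lt_two)

open Finset in
lemma tsum_le_three_mul_of_le_sq_of_le_inv_sq {t : ℕ → ℝ} {h : ℝ} (hh : 0 ≤ h)
    (ht0 : ∀ n, 0 ≤ t n) (hth : ∀ n, t n ≤ h ^ 2) (htn : ∀ n, t n ≤ (((n : ℝ) + 1) ^ 2)⁻¹) :
    ∑' n, t n ≤ 3 * h := by
  rcases hh.eq_or_lt with rfl | hpos
  · have ht : ∀ n, t n = 0 := fun n => le_antisymm (by simpa using hth n) (ht0 n)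
    simp [ht]
  set N := ⌊h⁻¹⌋₊
  have hNh : (N : ℝ) * h ≤ 1 := by
    simpa [hpos.ne'] using mul_le_mul_of_nonneg_right (Nat.floor_le (inv_nonneg.mpr hh)) hh
  have hNh' : 1 ≤ ((N : ℝ) + 1) * h := by
    simpa [hpos.ne'] using mul_le_mul_of_nonneg_right (Nat.lt_floor_add_one h⁻¹).le hh
  refine Real.tsum_le_of_sum_range_le ht0 fun M => ?_
  calc ∑ n ∈ range M, t n ≤ ∑ n ∈ range (N + M), t n :=
        sum_le_sum_of_subset_of_nonneg (range_mono (by omega)) fun _ _ _ => ht0 _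
    _ = ∑ n ∈ range N, t n + ∑ n ∈ Ico N (N + M), t n :=
        (sum_range_add_sum_Ico _ (by omega)).symm
    _ ≤ N * h ^ 2 + ∑ n ∈ Ico N (N + M), (((n : ℝ) + 1) ^ 2)⁻¹ := by
        gcongr with n
        · simpa using sum_le_card_nsmul (range N) t _ fun n _ => hth n
        · exact htn n
    _ = N * h ^ 2 + ∑ i ∈ Ioo N (N + M + 1), ((i : ℝ) ^ 2)⁻¹ := by
        rw [← Finset.Ico_add_one_left_eq_Ioo, ← sum_Ico_add' (fun i : ℕ => ((i : ℝ) ^ 2)⁻¹)]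
        push_cast
        rfl
    _ ≤ N * h ^ 2 + 2 / (N + 1) := by gcongr; exact sum_Ioo_inv_sq_le _ _
    _ ≤ h + 2 * h := by
        gcongr
        · nlinarith
        · rw [div_le_iff₀ (by positivity)]; linarith
    _ = 3 * h := by ring

lemma integral_cos_int_mul_pi_mul (j : ℤ) :
    ∫ y in (0 : ℝ)..1, cos (j * π * y) = if j = 0 then 1 else 0 := by
  split_ifs with hj
  · simp [hj]
  · have hjπ : (j : ℝ) * π ≠ 0 := mul_ne_zero (Int.cast_ne_zero.mpr hj) pi_ne_zero
    simp [intervalIntegral.integral_comp_mul_left cos hjπ, sin_int_mul_pi]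

def dirichletMode (n : ℕ) (x : ℝ) : ℝ := sin (((n : ℝ) + 1) * π * x)

def dirichletEigenvalue (n : ℕ) : ℝ := ((n : ℝ) + 1) ^ 2 * π ^ 2

lemma continuous_dirichletMode (n : ℕ) : Continuous (dirichletMode n) := by
  unfold dirichletMode; fun_prop

lemma abs_dirichletMode_le_one (n : ℕ) (x : ℝ) : |dirichletMode n x| ≤ 1 := abs_sin_le_one _

lemma abs_dirichletMode_sub_le_two (n : ℕ) (x z : ℝ) :
    |dirichletMode n x - dirichletMode n z| ≤ 2 :=
  (abs_sub _ _).trans (by linarith [abs_dirichletMode_le_one n x, abs_dirichletMode_le_one n z])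

lemma dirichletEigenvalue_pos (n : ℕ) : 0 < dirichletEigenvalue n := by
  unfold dirichletEigenvalue; positivity

lemma integral_dirichletMode_mul (n m : ℕ) :
    ∫ y in (0 : ℝ)..1, dirichletMode n y * dirichletMode m y = if n = m then 1 / 2 else 0 := by
  have hprod : ∀ y, dirichletMode n y * dirichletMode m y =
      (cos (((n - m : ℤ) : ℝ) * π * y) - cos (((n + m + 2 : ℤ) : ℝ) * π * y)) / 2 := fun y => by
    have hsub : ((n - m : ℤ) : ℝ) * π * y = (n + 1) * π * y - (m + 1) * π * y := by
      push_cast; ring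
    have hadd : ((n + m + 2 : ℤ) : ℝ) * π * y = (n + 1) * π * y + (m + 1) * π * y := by
      push_cast; ring
    rw [hsub, hadd, cos_sub, cos_add, dirichletMode, dirichletMode]
    ring
  simp_rw [hprod]
  rw [intervalIntegral.integral_div, intervalIntegral.integral_sub
      (Continuous.intervalIntegrable (by fun_prop) _ _)
      (Continuous.intervalIntegrable (by fun_prop) _ _),
    integral_cos_int_mul_pi_mul, integral_cos_int_mul_pi_mul]
  split_ifs <;> first | omega | norm_num

lemma G_eq_tsum (t x y : ℝ) : G t x y = 2 * ∑' n, dirichletMode n x * dirichletMode n y *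
    exp (-dirichletEigenvalue n * t / 2) := by
  refine congrArg (2 * ·) (tsum_congr fun n => ?_)
  rw [dirichletMode, dirichletMode, dirichletEigenvalue]
  congr 2
  ring

lemma summable_exp_neg_dirichletEigenvalue_mul {s : ℝ} (hs : 0 < s) :
    Summable fun n => exp (-dirichletEigenvalue n * s) := by
  have := Real.summable_exp_nat_mul_of_ge (c := -(π ^ 2 * s)) (by simp; positivity)
    (f := fun n => ((n : ℝ) + 1) ^ 2) fun n => by nlinarith
  simpa [dirichletEigenvalue, mul_comm, mul_left_comm, mul_assoc] using this

lemma G_sub_G_eq_tsum {s : ℝ} (hs : 0 < s) (x z y : ℝ) :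
    G s x y - G s z y = ∑' n, 2 * (dirichletMode n x - dirichletMode n z) *
      exp (-dirichletEigenvalue n * s / 2) * dirichletMode n y := by
  have hsummable : ∀ u, Summable fun n => dirichletMode n u * dirichletMode n y *
      exp (-dirichletEigenvalue n * s / 2) := fun u => by
    refine (summable_exp_neg_dirichletEigenvalue_mul (half_pos hs)).of_norm_bounded fun n => ?_
    rw [Real.norm_eq_abs, abs_mul, abs_mul, abs_of_pos (exp_pos _), mul_div_assoc]
    have := mul_le_one₀ (abs_dirichletMode_le_one n u) (abs_nonneg _)
      (abs_dirichletMode_le_one n y)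
    nlinarith [exp_pos (-dirichletEigenvalue n * (s / 2))]
  rw [G_eq_tsum, G_eq_tsum, ← mul_sub, ← (hsummable x).tsum_sub (hsummable z), ← tsum_mul_left]
  exact tsum_congr fun n => by ring

lemma intervalIntegral_sq_G_sub_G {s : ℝ} (hs : 0 < s) (x z : ℝ) :
    ∫ y in (0 : ℝ)..1, (G s x y - G s z y) ^ 2 =
      ∑' n, 2 * (dirichletMode n x - dirichletMode n z) ^ 2 * exp (-dirichletEigenvalue n * s) := by
  have hc : Summable fun n => |2 * (dirichletMode n x - dirichletMode n z) *
      exp (-dirichletEigenvalue n * s / 2)| := by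
    refine ((summable_exp_neg_dirichletEigenvalue_mul (half_pos hs)).mul_left 4).of_nonneg_of_le
      (fun n => abs_nonneg _) fun n => ?_
    rw [abs_mul, abs_mul, abs_of_pos (exp_pos _), abs_two, mul_div_assoc]
    nlinarith [abs_dirichletMode_sub_le_two n x z, exp_pos (-dirichletEigenvalue n * (s / 2))]
  simp_rw [G_sub_G_eq_tsum hs]
  rw [intervalIntegral_tsum_sq_of_orthogonal continuous_dirichletMode abs_dirichletMode_le_one
    integral_dirichletMode_mul hc, ← tsum_mul_left]
  refine tsum_congr fun n => ?_
  rw [mul_pow, mul_pow, ← exp_nat_mul]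
  ring_nf

lemma dirichletMode_sub_sq_div_le_sq (n : ℕ) (x z : ℝ) :
    (dirichletMode n x - dirichletMode n z) ^ 2 / dirichletEigenvalue n ≤ |x - z| ^ 2 := by
  have hlip : |dirichletMode n x - dirichletMode n z| ≤ ((n : ℝ) + 1) * π * |x - z| := by
    refine (abs_sin_sub_sin_le _ _).trans_eq ?_
    rw [← mul_sub, abs_mul, abs_of_pos (by positivity)]
  rw [div_le_iff₀ (dirichletEigenvalue_pos n), dirichletEigenvalue, ← sq_abs]
  nlinarith [pow_le_pow_left₀ (abs_nonneg _) hlip 2]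

lemma dirichletMode_sub_sq_div_le_inv_sq (n : ℕ) (x z : ℝ) :
    (dirichletMode n x - dirichletMode n z) ^ 2 / dirichletEigenvalue n ≤
      (((n : ℝ) + 1) ^ 2)⁻¹ := by
  have hπ : 2 ≤ π := by linarith [pi_gt_three]
  rw [div_le_iff₀ (dirichletEigenvalue_pos n), dirichletEigenvalue,
    inv_mul_cancel_left₀ (by positivity), ← sq_abs]
  exact pow_le_pow_left₀ (abs_nonneg _) ((abs_dirichletMode_sub_le_two n x z).trans hπ) 2

theorem dirichlet_kernel_L2_space_increment :
    ∃ C : ℝ, 0 < C ∧ ∀ x z : ℝ, x ∈ Set.Icc (0 : ℝ) 1 → z ∈ Set.Icc (0 : ℝ) 1 →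
      (∫ s in Set.Ioi (0 : ℝ), ∫ y in (0 : ℝ)..1, (G s x y - G s z y) ^ 2)
        ≤ C * |x - z| := by
  refine ⟨6, by norm_num, fun x z _ _ => ?_⟩
  set t := fun n => (dirichletMode n x - dirichletMode n z) ^ 2 / dirichletEigenvalue n
  have ht0 : ∀ n, 0 ≤ t n := fun n => div_nonneg (sq_nonneg _) (dirichletEigenvalue_pos n).le
  have hsum : Summable fun n => 2 * (dirichletMode n x - dirichletMode n z) ^ 2 /
      dirichletEigenvalue n :=
    (summable_inv_add_one_sq.of_nonneg_of_le ht0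
      (dirichletMode_sub_sq_div_le_inv_sq · x z)).mul_left 2 |>.congr fun n => by ring
  rw [setIntegral_congr_fun measurableSet_Ioi fun s hs => intervalIntegral_sq_G_sub_G hs x z,
    integral_Ioi_tsum_mul_exp_neg (fun n => by positivity) dirichletEigenvalue_pos hsum]
  calc ∑' n, 2 * (dirichletMode n x - dirichletMode n z) ^ 2 / dirichletEigenvalue n
      = 2 * ∑' n, t n := by rw [← tsum_mul_left]; exact tsum_congr fun n => by ring
    _ ≤ 2 * (3 * |x - z|) := by
      gcongr
      exact tsum_le_three_mul_of_le_sq_of_le_inv_sq (abs_nonneg _) ht0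
        (dirichletMode_sub_sq_div_le_sq · x z) (dirichletMode_sub_sq_div_le_inv_sq · x z)
    _ = 6 * |x - z| := by ring

end
end

section
/- If δ, α ∈ (0,1) and χ ∈ [0,1], then there is a constant C = C(δ, α, χ) such that t^α e^{-βt} ∫₀^t s^{-α} (log₊(1/s))^χ e^{βs} ds ≤ C β^{-(1-δ)} uniformly for all t ∈ (0,1] and β > 0. Moreover, when χ = 0 the estimate holds with δ = 0, i.e. the bound is C/β. -/
open Real MeasureTheory Set Filter

noncomputable section

/-- `log₊ a = log (a + e)`. -/
def logPlus (a : ℝ) : ℝ := Real.log (a + Real.exp 1)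

lemma aux_exp (x : ℝ) (hx : 0 ≤ x) : x * Real.exp (-x/2) ≤ 1 := by
  have h1 : x ≤ Real.exp (x/2) := by
    have h := Real.add_one_le_exp (x/4)
    have h2 : Real.exp (x/4) * Real.exp (x/4) = Real.exp (x/2) := by
      rw [← Real.exp_add]; ring_nf
    nlinarith [Real.exp_pos (x/4), sq_nonneg (x/4 - 1)]
  have h3 : Real.exp (-x/2) = (Real.exp (x/2))⁻¹ := by
    rw [← Real.exp_neg]; ring_nf
  rw [h3]
  calc x * (Real.exp (x/2))⁻¹ ≤ Real.exp (x/2) * (Real.exp (x/2))⁻¹ :=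
        mul_le_mul_of_nonneg_right h1 (by positivity)
  _ = 1 := mul_inv_cancel₀ (Real.exp_ne_zero _)

lemma aux_pow_exp (ε x : ℝ) (hε0 : 0 ≤ ε) (hε1 : ε ≤ 1) (hx : 0 < x) :
    x ^ (1-ε) * Real.exp (-x/2) ≤ 1 := by
  rcases le_total x 1 with h|h
  · have h1 : x^(1-ε) ≤ 1 := Real.rpow_le_one hx.le h (by linarith)
    have h2 : Real.exp (-x/2) ≤ 1 := Real.exp_le_one_iff.mpr (by linarith)
    nlinarith [Real.exp_pos (-x/2), Real.rpow_nonneg hx.le (1-ε)]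
  · have h1 : x^(1-ε) ≤ x := by
      calc x^(1-ε) ≤ x^(1:ℝ) := Real.rpow_le_rpow_of_exponent_le h (by linarith)
      _ = x := Real.rpow_one x
    calc x^(1-ε) * Real.exp (-x/2) ≤ x * Real.exp (-x/2) :=
          mul_le_mul_of_nonneg_right h1 (by positivity)
    _ ≤ 1 := aux_exp x (by linarith)

lemma aux_P (ε δ t β : ℝ) (hε0 : 0 ≤ ε) (hεδ : ε ≤ δ) (hδ1 : δ < 1)
    (ht0 : 0 < t) (ht1 : t ≤ 1) (hβ : 0 < β) :
    t^(1-ε) * Real.exp (-(β*t)/2) ≤ β^(δ-1) := by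
  have hε1 : ε ≤ 1 := by linarith
  rcases le_total β 1 with h|h
  · have h1 : t^(1-ε) ≤ 1 := Real.rpow_le_one ht0.le ht1 (by linarith)
    have h2 : Real.exp (-(β*t)/2) ≤ 1 := Real.exp_le_one_iff.mpr (by nlinarith)
    have h3 : (1:ℝ) ≤ β^(δ-1) := by
      have := Real.rpow_le_rpow_of_exponent_ge hβ h (show δ-1 ≤ 0 by linarith)
      rwa [Real.rpow_zero] at this
    nlinarith [Real.exp_pos (-(β*t)/2), Real.rpow_nonneg ht0.le (1-ε)]
  · have key : β^(1-ε) * (t^(1-ε) * Real.exp (-(β*t)/2)) ≤ 1 := by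
      have hm : (β*t)^(1-ε) = β^(1-ε) * t^(1-ε) := Real.mul_rpow hβ.le ht0.le
      have h2 := aux_pow_exp ε (β*t) hε0 hε1 (by positivity)
      rw [hm, mul_assoc] at h2; exact h2
    have hb1 : (0:ℝ) < β^(1-ε) := Real.rpow_pos_of_pos hβ _
    have h4 : t^(1-ε) * Real.exp (-(β*t)/2) ≤ β^(ε-1) := by
      have h5 : (β^(1-ε))⁻¹ = β^(ε-1) := by
        rw [← Real.rpow_neg hβ.le]; ring_nf
      rw [← h5, ← one_div, le_div_iff₀ hb1]
      linarith [key]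
    calc t^(1-ε) * Real.exp (-(β*t)/2) ≤ β^(ε-1) := h4
    _ ≤ β^(δ-1) := Real.rpow_le_rpow_of_exponent_le h (by linarith)

lemma aux_Q (ε δ t β : ℝ) (hε0 : 0 ≤ ε) (hεδ : ε ≤ δ) (hδ1 : δ < 1)
    (ht0 : 0 < t) (ht1 : t ≤ 1) (hβ : 0 < β) :
    t^(-ε) * min t (1/β) ≤ β^(δ-1) := by
  have hε1 : ε ≤ 1 := by linarith
  have h0 : t^(-ε) * t = t^(1-ε) := by
    nth_rewrite 2 [← Real.rpow_one t]
    rw [← Real.rpow_add ht0]; ring_nf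
  rcases le_total β 1 with h|h
  · have h3 : (1:ℝ) ≤ β^(δ-1) := by
      have := Real.rpow_le_rpow_of_exponent_ge hβ h (show δ-1 ≤ 0 by linarith)
      rwa [Real.rpow_zero] at this
    have h1 : t^(-ε) * min t (1/β) ≤ t^(1-ε) := by
      rw [← h0]
      exact mul_le_mul_of_nonneg_left (min_le_left _ _) (Real.rpow_nonneg ht0.le _)
    have h2 : t^(1-ε) ≤ 1 := Real.rpow_le_one ht0.le ht1 (by linarith)
    linarith
  · rcases le_total t (1/β) with h2|h2
    · rw [min_eq_left h2, h0]
      have h3 : t^(1-ε) ≤ (1/β)^(1-ε) :=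
        Real.rpow_le_rpow ht0.le h2 (by linarith)
      have h4 : (1/β)^(1-ε) = β^(ε-1) := by
        rw [one_div, Real.inv_rpow hβ.le, ← Real.rpow_neg hβ.le]; ring_nf
      calc t^(1-ε) ≤ (1/β)^(1-ε) := h3
      _ = β^(ε-1) := h4
      _ ≤ β^(δ-1) := Real.rpow_le_rpow_of_exponent_le h (by linarith)
    · rw [min_eq_right h2]
      have h3 : t^(-ε) ≤ (1/β)^(-ε) :=
        Real.rpow_le_rpow_of_nonpos (by positivity) h2 (by linarith)
      have h4 : (1/β)^(-ε) * (1/β) = β^(ε-1) := by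
        rw [one_div, Real.inv_rpow hβ.le, ← Real.rpow_neg hβ.le, neg_neg,
          ← Real.rpow_neg_one β, ← Real.rpow_add hβ]
        ring_nf
      calc t^(-ε) * (1/β) ≤ (1/β)^(-ε) * (1/β) :=
            mul_le_mul_of_nonneg_right h3 (by positivity)
      _ = β^(ε-1) := h4
      _ ≤ β^(δ-1) := Real.rpow_le_rpow_of_exponent_le h (by linarith)

lemma one_le_logPlus {a : ℝ} (ha : 0 ≤ a) : 1 ≤ logPlus a := by
  unfold logPlus
  calc (1:ℝ) = Real.log (Real.exp 1) := (Real.log_exp 1).symm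
  _ ≤ Real.log (a + Real.exp 1) := Real.log_le_log (Real.exp_pos 1) (by linarith)

lemma logPlus_bound (χ ε : ℝ) (hχ0 : 0 ≤ χ) (hχ1 : χ ≤ 1) (hε : 0 < ε)
    (s : ℝ) (hs : s ∈ Set.Ioc (0:ℝ) 1) :
    (logPlus (1/s))^χ ≤ (Real.log (1 + Real.exp 1) + 1/ε) * s^(-ε) := by
  obtain ⟨hs0, hs1⟩ := hs
  have hL1 : 1 ≤ logPlus (1/s) := one_le_logPlus (by positivity)
  have h1 : (logPlus (1/s))^χ ≤ logPlus (1/s) := by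
    calc (logPlus (1/s))^χ ≤ (logPlus (1/s))^(1:ℝ) :=
          Real.rpow_le_rpow_of_exponent_le hL1 hχ1
    _ = logPlus (1/s) := Real.rpow_one _
  have h1s : (1:ℝ) ≤ 1/s := by rw [le_div_iff₀ hs0]; linarith
  have h2 : logPlus (1/s) ≤ Real.log (1 + Real.exp 1) + Real.log (1/s) := by
    unfold logPlus
    rw [← Real.log_mul (by positivity) (by positivity)]
    apply Real.log_le_log (by positivity)
    nlinarith [Real.exp_pos 1]
  have h3 : Real.log (1/s) ≤ (1/s)^ε / ε := Real.log_le_rpow_div (by positivity) hε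
  have h4 : (1/s)^ε = s^(-ε) := by
    rw [one_div, Real.inv_rpow hs0.le, ← Real.rpow_neg hs0.le]
  rw [h4] at h3
  have h5 : 1 ≤ s^(-ε) :=
    Real.one_le_rpow_of_pos_of_le_one_of_nonpos hs0 hs1 (by linarith)
  have h6 : 0 ≤ Real.log (1 + Real.exp 1) := Real.log_nonneg (by nlinarith [Real.exp_pos 1])
  have h7 : (Real.log (1 + Real.exp 1) + 1/ε) * s^(-ε)
      = Real.log (1 + Real.exp 1) * s^(-ε) + s^(-ε)/ε := by ring
  nlinarith [mul_nonneg h6 (sub_nonneg.mpr h5), h7]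



lemma helper (α ε χ K : ℝ) (hα0 : 0 < α) (hε0 : 0 ≤ ε) (hγ1 : α + ε < 1) (hK : 0 < K)
    (hmaj : ∀ s : ℝ, s ∈ Set.Ioc (0:ℝ) 1 → (logPlus (1/s)) ^ χ ≤ K * s ^ (-ε))
    (t β : ℝ) (ht : t ∈ Set.Ioc (0:ℝ) 1) (hβ : 0 < β) :
    t ^ α * Real.exp (-β * t) *
        (∫ s in (0:ℝ)..t, s ^ (-α) * (logPlus (1/s)) ^ χ * Real.exp (β * s))
      ≤ (2*K/(1-α-ε)) * (t ^ (1-ε) * Real.exp (-(β*t)/2)) +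
        (2*K) * (t ^ (-ε) * min t (1/β)) := by
  obtain ⟨ht0, ht1⟩ := ht
  have h1γ : 0 < 1 - α - ε := by linarith
  have hγ0 : 0 < α + ε := by linarith
  -- pointwise bound
  have hpt : ∀ s : ℝ, 0 < s → s ≤ 1 →
      s ^ (-α) * (logPlus (1/s)) ^ χ * Real.exp (β * s)
        ≤ K * (s ^ (-(α+ε)) * Real.exp (β * s)) := by
    intro s hs0 hs1
    have h1 := hmaj s ⟨hs0, hs1⟩
    have h2 : s^(-α) * (K * s^(-ε)) = K * s^(-(α+ε)) := by
      rw [show -(α+ε) = -α + -ε by ring, Real.rpow_add hs0]; ring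
    calc s^(-α) * (logPlus (1/s))^χ * Real.exp (β*s)
        ≤ s^(-α) * (K * s^(-ε)) * Real.exp (β*s) := by
          apply mul_le_mul_of_nonneg_right _ (Real.exp_pos _).le
          exact mul_le_mul_of_nonneg_left h1 (Real.rpow_nonneg hs0.le _)
    _ = K * (s^(-(α+ε)) * Real.exp (β*s)) := by rw [h2]; ring
  have hcont : Continuous (fun s : ℝ => Real.exp (β * s)) := by fun_prop
  have irpow : ∀ (c : ℝ), -1 < c → ∀ a b : ℝ,
      IntervalIntegrable (fun s : ℝ => s ^ c * Real.exp (β * s)) volume a b :=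
    fun c hc a b =>
      (intervalIntegral.intervalIntegrable_rpow' hc).mul_continuousOn hcont.continuousOn
  have hg_cont : ContinuousOn (fun s : ℝ =>
      s ^ (-α) * (logPlus (1/s)) ^ χ * Real.exp (β * s)) (Set.Ioc 0 t) := by
    intro s hs
    apply ContinuousAt.continuousWithinAt
    have hs0 : 0 < s := hs.1
    have hX : (1:ℝ) ≤ logPlus (1/s) := one_le_logPlus (by positivity)
    have hlp : ContinuousAt (fun x : ℝ => logPlus (1/x)) s := by
      unfold logPlus
      apply ContinuousAt.log
      · exact ((continuousAt_const.div continuousAt_id hs0.ne')).add continuousAt_const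
      · positivity
    exact ((Real.continuousAt_rpow_const s (-α) (Or.inl hs0.ne')).mul
      ((Real.continuousAt_rpow_const _ χ (Or.inl (by linarith))).comp hlp)).mul
      ((Real.continuous_exp.comp (continuous_const.mul continuous_id)).continuousAt)
  have hg_nonneg : ∀ s : ℝ, 0 < s →
      0 ≤ s ^ (-α) * (logPlus (1/s)) ^ χ * Real.exp (β * s) := by
    intro s hs0
    have hX : (0:ℝ) ≤ logPlus (1/s) := le_trans zero_le_one (one_le_logPlus (by positivity))
    exact mul_nonneg (mul_nonneg (Real.rpow_nonneg hs0.le _) (Real.rpow_nonneg hX _))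
      (Real.exp_pos _).le
  have hg_int : IntervalIntegrable (fun s : ℝ =>
      s ^ (-α) * (logPlus (1/s)) ^ χ * Real.exp (β * s)) volume 0 t := by
    apply IntervalIntegrable.mono_fun' ((irpow (-(α+ε)) (by linarith) 0 t).const_mul K)
    · rw [Set.uIoc_of_le ht0.le]
      exact hg_cont.aestronglyMeasurable measurableSet_Ioc
    · rw [Set.uIoc_of_le ht0.le]
      refine (MeasureTheory.ae_restrict_iff' measurableSet_Ioc).mpr
        (Filter.Eventually.of_forall fun s hs => ?_)
      have hs1 : s ≤ 1 := hs.2.trans ht1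
      show ‖s ^ (-α) * (logPlus (1/s)) ^ χ * Real.exp (β * s)‖ ≤ _
      rw [Real.norm_eq_abs, abs_of_nonneg (hg_nonneg s hs.1)]
      exact hpt s hs.1 hs1
  have hi1 : IntervalIntegrable (fun s : ℝ =>
      s ^ (-α) * (logPlus (1/s)) ^ χ * Real.exp (β * s)) volume 0 (t/2) := by
    apply hg_int.mono_set
    rw [Set.uIcc_of_le (by linarith : (0:ℝ) ≤ t/2), Set.uIcc_of_le ht0.le]
    exact Set.Icc_subset_Icc le_rfl (by linarith)
  have hi2 : IntervalIntegrable (fun s : ℝ =>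
      s ^ (-α) * (logPlus (1/s)) ^ χ * Real.exp (β * s)) volume (t/2) t := by
    apply hg_int.mono_set
    rw [Set.uIcc_of_le (by linarith : t/2 ≤ t), Set.uIcc_of_le ht0.le]
    exact Set.Icc_subset_Icc (by linarith) le_rfl
  have hsplit : (∫ s in (0:ℝ)..t, s ^ (-α) * (logPlus (1/s)) ^ χ * Real.exp (β * s))
      = (∫ s in (0:ℝ)..(t/2), s ^ (-α) * (logPlus (1/s)) ^ χ * Real.exp (β * s))
        + ∫ s in (t/2)..t, s ^ (-α) * (logPlus (1/s)) ^ χ * Real.exp (β * s) :=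
    (intervalIntegral.integral_add_adjacent_intervals hi1 hi2).symm
  -- first piece
  have hz1 : (0:ℝ) ^ (-α) = 0 := Real.zero_rpow (by intro h; simp at h; linarith)
  have hz2 : (0:ℝ) ^ (-(α+ε)) = 0 := Real.zero_rpow (by intro h; simp at h; linarith)
  have hb1 : (∫ s in (0:ℝ)..(t/2), s ^ (-α) * (logPlus (1/s)) ^ χ * Real.exp (β * s))
      ≤ K * Real.exp (β*(t/2)) * ((t/2)^(1-(α+ε))/(1-(α+ε))) := by
    have hmono : (∫ s in (0:ℝ)..(t/2), s ^ (-α) * (logPlus (1/s)) ^ χ * Real.exp (β * s))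
        ≤ ∫ s in (0:ℝ)..(t/2), (K * Real.exp (β*(t/2))) * s ^ (-(α+ε)) := by
      apply intervalIntegral.integral_mono_on (by linarith) hi1
        ((intervalIntegral.intervalIntegrable_rpow' (by linarith)).const_mul _)
      intro s hs
      rcases eq_or_lt_of_le hs.1 with h|h
      · rw [← h, hz1, hz2]; simp
      · have hs1' : s ≤ 1 := le_trans hs.2 (by linarith)
        calc s ^ (-α) * (logPlus (1/s)) ^ χ * Real.exp (β * s)
            ≤ K * (s^(-(α+ε)) * Real.exp (β*s)) := hpt s h hs1'
        _ ≤ K * (s^(-(α+ε)) * Real.exp (β*(t/2))) := by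
            apply mul_le_mul_of_nonneg_left _ hK.le
            apply mul_le_mul_of_nonneg_left _ (Real.rpow_nonneg h.le _)
            exact Real.exp_le_exp.mpr (mul_le_mul_of_nonneg_left hs.2 hβ.le)
        _ = (K * Real.exp (β*(t/2))) * s^(-(α+ε)) := by ring
    have hval : (∫ s in (0:ℝ)..(t/2), (K * Real.exp (β*(t/2))) * s ^ (-(α+ε)))
        = K * Real.exp (β*(t/2)) * ((t/2)^(1-(α+ε))/(1-(α+ε))) := by
      rw [intervalIntegral.integral_const_mul, integral_rpow (Or.inl (by linarith)),
        Real.zero_rpow (by intro h; simp at h; linarith : -(α+ε)+1 ≠ 0)]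
      rw [show -(α+ε)+1 = 1-(α+ε) by ring]
      ring
    linarith [hmono, hval.le, hval.ge]
  -- second piece
  have hexp2 : (∫ s in (t/2)..t, Real.exp (β*s))
      = β⁻¹ * (Real.exp (β*t) - Real.exp (β*(t/2))) := by
    rw [intervalIntegral.integral_comp_mul_left (fun x => Real.exp x) hβ.ne',
      integral_exp, smul_eq_mul]
  have hb2 : (∫ s in (t/2)..t, s ^ (-α) * (logPlus (1/s)) ^ χ * Real.exp (β * s))
      ≤ (K * (t/2)^(-(α+ε))) * (β⁻¹ * (Real.exp (β*t) - Real.exp (β*(t/2)))) := by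
    have hmono : (∫ s in (t/2)..t, s ^ (-α) * (logPlus (1/s)) ^ χ * Real.exp (β * s))
        ≤ ∫ s in (t/2)..t, (K * (t/2)^(-(α+ε))) * Real.exp (β*s) := by
      apply intervalIntegral.integral_mono_on (by linarith) hi2
        (Continuous.intervalIntegrable (by fun_prop) _ _)
      intro s hs
      have hs0 : 0 < s := lt_of_lt_of_le (by linarith) hs.1
      calc s ^ (-α) * (logPlus (1/s)) ^ χ * Real.exp (β * s)
          ≤ K * (s^(-(α+ε)) * Real.exp (β*s)) := hpt s hs0 (hs.2.trans ht1)
      _ ≤ K * ((t/2)^(-(α+ε)) * Real.exp (β*s)) := by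
          apply mul_le_mul_of_nonneg_left _ hK.le
          apply mul_le_mul_of_nonneg_right _ (Real.exp_pos _).le
          exact Real.rpow_le_rpow_of_nonpos (by linarith) hs.1 (by linarith)
      _ = (K * (t/2)^(-(α+ε))) * Real.exp (β*s) := by ring
    rw [intervalIntegral.integral_const_mul, hexp2] at hmono
    exact hmono
  -- combine
  have hA : (0:ℝ) ≤ t ^ α * Real.exp (-β * t) := by positivity
  have hcomb : t ^ α * Real.exp (-β * t) *
      (∫ s in (0:ℝ)..t, s ^ (-α) * (logPlus (1/s)) ^ χ * Real.exp (β * s))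
      ≤ t ^ α * Real.exp (-β * t) * (K * Real.exp (β*(t/2)) * ((t/2)^(1-(α+ε))/(1-(α+ε))))
        + t ^ α * Real.exp (-β * t) * ((K * (t/2)^(-(α+ε))) * (β⁻¹ * (Real.exp (β*t) - Real.exp (β*(t/2))))) := by
    rw [hsplit, mul_add]
    exact add_le_add (mul_le_mul_of_nonneg_left hb1 hA) (mul_le_mul_of_nonneg_left hb2 hA)
  -- term 1
  have f1 : Real.exp (-β*t) * Real.exp (β*(t/2)) = Real.exp (-(β*t)/2) := by
    rw [← Real.exp_add]; congr 1; ring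
  have f2 : t^α * (t/2)^(1-(α+ε)) ≤ t^(1-ε) := by
    have h21 : (t/2)^(1-(α+ε)) ≤ t^(1-(α+ε)) :=
      Real.rpow_le_rpow (by linarith) (by linarith) (by linarith)
    have h22 : t^α * t^(1-(α+ε)) = t^(1-ε) := by
      rw [← Real.rpow_add ht0]; congr 1; ring
    calc t^α * (t/2)^(1-(α+ε)) ≤ t^α * t^(1-(α+ε)) :=
          mul_le_mul_of_nonneg_left h21 (Real.rpow_nonneg ht0.le _)
    _ = t^(1-ε) := h22
  have hT1 : t ^ α * Real.exp (-β * t) * (K * Real.exp (β*(t/2)) * ((t/2)^(1-(α+ε))/(1-(α+ε))))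
      ≤ (2*K/(1-α-ε)) * (t ^ (1-ε) * Real.exp (-(β*t)/2)) := by
    have e1 : t ^ α * Real.exp (-β * t) * (K * Real.exp (β*(t/2)) * ((t/2)^(1-(α+ε))/(1-(α+ε))))
        = (K/(1-α-ε)) * ((t^α * (t/2)^(1-(α+ε))) * (Real.exp (-β*t) * Real.exp (β*(t/2)))) := by
      rw [show 1-(α+ε) = 1-α-ε by ring]; ring
    rw [e1, f1]
    have step1 : (K/(1-α-ε)) * ((t^α * (t/2)^(1-(α+ε))) * Real.exp (-(β*t)/2))
        ≤ (K/(1-α-ε)) * (t^(1-ε) * Real.exp (-(β*t)/2)) := by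
      apply mul_le_mul_of_nonneg_left _ (by positivity)
      exact mul_le_mul_of_nonneg_right f2 (Real.exp_pos _).le
    have step2 : (K/(1-α-ε)) * (t^(1-ε) * Real.exp (-(β*t)/2))
        ≤ (2*K/(1-α-ε)) * (t^(1-ε) * Real.exp (-(β*t)/2)) := by
      apply mul_le_mul_of_nonneg_right _ (by positivity)
      exact (div_le_div_iff_of_pos_right h1γ).mpr (by linarith)
    linarith
  -- term 2
  have f3 : Real.exp (-β*t) * (Real.exp (β*t) - Real.exp (β*(t/2))) = 1 - Real.exp (-(β*t)/2) := by
    rw [mul_sub, ← Real.exp_add, ← Real.exp_add, show -β*t + β*t = 0 by ring, Real.exp_zero,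
      show -β*t + β*(t/2) = -(β*t)/2 by ring]
  have f4 : t^α * (t/2)^(-(α+ε)) ≤ 2 * t^(-ε) := by
    have ha : (t/2)^(-(α+ε)) = t^(-(α+ε)) * (2:ℝ)^(α+ε) := by
      rw [show t/2 = t * 2⁻¹ by ring, Real.mul_rpow ht0.le (by norm_num),
        Real.inv_rpow (by norm_num : (0:ℝ) ≤ 2), Real.rpow_neg (by norm_num : (0:ℝ) ≤ 2),
        inv_inv]
    have hb : (2:ℝ)^(α+ε) ≤ 2 := by
      calc (2:ℝ)^(α+ε) ≤ (2:ℝ)^(1:ℝ) :=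
            Real.rpow_le_rpow_of_exponent_le one_le_two (by linarith)
      _ = 2 := Real.rpow_one 2
    have hc : t^α * t^(-(α+ε)) = t^(-ε) := by
      rw [← Real.rpow_add ht0]; congr 1; ring
    calc t^α * (t/2)^(-(α+ε)) = (t^α * t^(-(α+ε))) * (2:ℝ)^(α+ε) := by rw [ha]; ring
    _ = t^(-ε) * (2:ℝ)^(α+ε) := by rw [hc]
    _ ≤ t^(-ε) * 2 := mul_le_mul_of_nonneg_left hb (Real.rpow_nonneg ht0.le _)
    _ = 2 * t^(-ε) := mul_comm _ _
  have f5 : β⁻¹ * (1 - Real.exp (-(β*t)/2)) ≤ min t (1/β) := by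
    apply le_min
    · have h1 : 1 - Real.exp (-(β*t)/2) ≤ (β*t)/2 := by
        have := Real.add_one_le_exp (-(β*t)/2)
        linarith
      calc β⁻¹ * (1 - Real.exp (-(β*t)/2)) ≤ β⁻¹ * ((β*t)/2) :=
            mul_le_mul_of_nonneg_left h1 (by positivity)
      _ = t/2 := by field_simp
      _ ≤ t := by linarith
    · have h1 : 1 - Real.exp (-(β*t)/2) ≤ 1 := by linarith [Real.exp_pos (-(β*t)/2)]
      calc β⁻¹ * (1 - Real.exp (-(β*t)/2)) ≤ β⁻¹ * 1 :=
            mul_le_mul_of_nonneg_left h1 (by positivity)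
      _ = 1/β := by rw [mul_one, one_div]
  have f6 : 0 ≤ 1 - Real.exp (-(β*t)/2) := by
    have : Real.exp (-(β*t)/2) ≤ 1 := Real.exp_le_one_iff.mpr (by nlinarith)
    linarith
  have hT2 : t ^ α * Real.exp (-β * t) * ((K * (t/2)^(-(α+ε))) * (β⁻¹ * (Real.exp (β*t) - Real.exp (β*(t/2)))))
      ≤ (2*K) * (t ^ (-ε) * min t (1/β)) := by
    have e2 : t ^ α * Real.exp (-β * t) * ((K * (t/2)^(-(α+ε))) * (β⁻¹ * (Real.exp (β*t) - Real.exp (β*(t/2)))))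
        = K * (t^α * (t/2)^(-(α+ε))) * (β⁻¹ * (Real.exp (-β*t) * (Real.exp (β*t) - Real.exp (β*(t/2))))) := by
      ring
    rw [e2, f3]
    calc K * (t^α * (t/2)^(-(α+ε))) * (β⁻¹ * (1 - Real.exp (-(β*t)/2)))
        ≤ K * (2 * t^(-ε)) * (β⁻¹ * (1 - Real.exp (-(β*t)/2))) := by
          apply mul_le_mul_of_nonneg_right _ (by positivity)
          exact mul_le_mul_of_nonneg_left f4 hK.le
    _ ≤ K * (2 * t^(-ε)) * min t (1/β) := by
          apply mul_le_mul_of_nonneg_left f5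
          positivity
    _ = (2*K) * (t^(-ε) * min t (1/β)) := by ring
  linarith


theorem weighted_log_integral_bound
    (δ α χ : ℝ) (hδ : δ ∈ Set.Ioo (0 : ℝ) 1) (hα : α ∈ Set.Ioo (0 : ℝ) 1)
    (hχ : χ ∈ Set.Icc (0 : ℝ) 1) :
    ∃ C : ℝ, 0 < C ∧
      (∀ t β : ℝ, t ∈ Set.Ioc (0 : ℝ) 1 → 0 < β →
        t ^ α * Real.exp (-β * t) *
          (∫ s in (0 : ℝ)..t, s ^ (-α) * (logPlus (1 / s)) ^ χ * Real.exp (β * s))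
          ≤ C * β ^ (-(1 - δ))) ∧
      (χ = 0 → ∀ t β : ℝ, t ∈ Set.Ioc (0 : ℝ) 1 → 0 < β →
        t ^ α * Real.exp (-β * t) *
          (∫ s in (0 : ℝ)..t, s ^ (-α) * (logPlus (1 / s)) ^ χ * Real.exp (β * s))
          ≤ C / β) := by
  obtain ⟨hδ0, hδ1⟩ := hδ
  obtain ⟨hα0, hα1⟩ := hα
  obtain ⟨hχ0, hχ1⟩ := hχ
  set ε : ℝ := min δ ((1-α)/2) with hεdef
  have hε0 : 0 < ε := lt_min hδ0 (by linarith)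
  have hεδ : ε ≤ δ := min_le_left _ _
  have hγ1 : α + ε < 1 := by
    have := min_le_right δ ((1-α)/2)
    linarith
  set K : ℝ := Real.log (1 + Real.exp 1) + 1/ε with hKdef
  have hK : 0 < K := by
    have h6 : 0 ≤ Real.log (1 + Real.exp 1) := Real.log_nonneg (by nlinarith [Real.exp_pos 1])
    have : 0 < 1/ε := by positivity
    rw [hKdef]; linarith
  have h1γ : 0 < 1 - α - ε := by linarith
  set C : ℝ := 2*K/(1-α-ε) + 2*K + (2/(1-α) + 2) with hCdef
  have hC : 0 < C := by
    have h1 : 0 < 2*K/(1-α-ε) := by positivity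
    have h2 : 0 < 2/(1-α) := by
      apply div_pos (by norm_num)
      linarith
    have h3 : 0 < 2*K := by positivity
    rw [hCdef]; linarith
  refine ⟨C, hC, ?_, ?_⟩
  · intro t β ht hβ
    have hbound := helper α ε χ K hα0 hε0.le hγ1 hK
      (fun s hs => logPlus_bound χ ε hχ0 hχ1 hε0 s hs) t β ht hβ
    have hP := aux_P ε δ t β hε0.le hεδ hδ1 ht.1 ht.2 hβ
    have hQ := aux_Q ε δ t β hε0.le hεδ hδ1 ht.1 ht.2 hβ
    have hrw : β ^ (-(1-δ)) = β ^ (δ-1) := by rw [show -(1-δ) = δ-1 by ring]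
    rw [hrw]
    have h1 : (2*K/(1-α-ε)) * (t ^ (1-ε) * Real.exp (-(β*t)/2))
        ≤ (2*K/(1-α-ε)) * β^(δ-1) := mul_le_mul_of_nonneg_left hP (by positivity)
    have h2 : (2*K) * (t ^ (-ε) * min t (1/β)) ≤ (2*K) * β^(δ-1) :=
      mul_le_mul_of_nonneg_left hQ (by positivity)
    have h3 : (2*K/(1-α-ε) + 2*K) * β^(δ-1) ≤ C * β^(δ-1) := by
      apply mul_le_mul_of_nonneg_right _ (Real.rpow_nonneg hβ.le _)
      have h4 : 0 < 2/(1-α) := by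
        apply div_pos (by norm_num); linarith
      rw [hCdef]; linarith
    calc t ^ α * Real.exp (-β * t) *
          (∫ s in (0 : ℝ)..t, s ^ (-α) * (logPlus (1 / s)) ^ χ * Real.exp (β * s))
        ≤ (2*K/(1-α-ε)) * (t ^ (1-ε) * Real.exp (-(β*t)/2)) +
          (2*K) * (t ^ (-ε) * min t (1/β)) := hbound
    _ ≤ (2*K/(1-α-ε) + 2*K) * β^(δ-1) := by linarith
    _ ≤ C * β^(δ-1) := h3
  · intro hχz t β ht hβ
    subst hχz
    have hmaj : ∀ s : ℝ, s ∈ Set.Ioc (0:ℝ) 1 → (logPlus (1/s)) ^ (0:ℝ) ≤ 1 * s ^ (-(0:ℝ)) := by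
      intro s hs
      rw [Real.rpow_zero, neg_zero, Real.rpow_zero, one_mul]
    have hbound := helper α 0 0 1 hα0 le_rfl (by linarith) one_pos hmaj t β ht hβ
    norm_num at hbound
    have hP : t * Real.exp (-(β*t)/2) ≤ 1/β := by
      have h := aux_exp (β*t) (mul_nonneg hβ.le ht.1.le)
      rw [le_div_iff₀ hβ]
      nlinarith [h]
    have e1 : 2/(1-α) * (t * Real.exp (-(β*t)/2)) ≤ 2/(1-α) * (1/β) :=
      mul_le_mul_of_nonneg_left hP (div_nonneg (by norm_num) (by linarith))
    have e2 : 2 * min t β⁻¹ ≤ 2 * β⁻¹ :=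
      mul_le_mul_of_nonneg_left (min_le_right _ _) (by norm_num)
    have hfin : 2/(1-α) * (1/β) + 2*β⁻¹ ≤ C/β := by
      rw [div_eq_mul_one_div C β]
      have h5 : 0 < 2*K/(1-α-ε) := by positivity
      have h6 : 0 < 2*K := by positivity
      have h7 : (2/(1-α)) * (1/β) + 2*β⁻¹ = (2/(1-α) + 2) * (1/β) := by ring
      rw [h7]
      apply mul_le_mul_of_nonneg_right _ (by positivity)
      rw [hCdef]; linarith
    norm_num
    refine hbound.trans ?_
    exact le_trans (add_le_add e1 e2) hfin

end
end

section
/- If α ∈ (0,1) and χ ≥ 0 are fixed, then there is a constant C = C(α, χ) such that t^α e^{-βt} ∫₀^t s^{-α} (log₊(1/s))^χ e^{βs} ds ≤ C (log β)^χ / β uniformly for all t > 0 and β ≥ e. -/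
/-!
Substituting u = βs turns the left-hand side into
β⁻¹ T^α e^{-T} ∫₀^T u^{-α} log₊(β/u)^χ e^u du with T = βt. For β ≥ e,
log₊(β/u) ≤ log₊ β + log₊(1/u) ≤ 3 log β · log₊(1/u), and log₊(1/u)^χ ≤ A (u^{-εχ} + 1)
for any ε > 0. So it suffices to pick ε with α + εχ < 1 and to bound
T^p e^{-T} ∫₀^T u^{-q} e^u du uniformly in T > 0 for 0 ≤ p ≤ q < 1: for T ≤ 1 use e^u ≤ e^T,
for T ≥ 1 use T^p ≤ T^q and split the integral at T/2.
-/

open Real MeasureTheory Set Filter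

noncomputable section

lemma intervalIntegral.integral_mono_of_nonneg_on {f g : ℝ → ℝ} {a b : ℝ} (hab : a ≤ b)
    (hg : IntervalIntegrable g volume a b) (hf : ∀ x ∈ Ioc a b, 0 ≤ f x)
    (hfg : ∀ x ∈ Ioc a b, f x ≤ g x) :
    ∫ x in a..b, f x ≤ ∫ x in a..b, g x := by
  rw [intervalIntegral.integral_of_le hab, intervalIntegral.integral_of_le hab]
  exact integral_mono_of_nonneg ((ae_restrict_iff' measurableSet_Ioc).2 (ae_of_all _ hf)) hg.1
    ((ae_restrict_iff' measurableSet_Ioc).2 (ae_of_all _ hfg))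

lemma logPlus_le_logPlus {a b : ℝ} (ha : 0 ≤ a) (hab : a ≤ b) : logPlus a ≤ logPlus b :=
  log_le_log (by positivity) (by linarith)

lemma logPlus_mul_le {a b : ℝ} (ha : 0 ≤ a) (hb : 0 ≤ b) :
    logPlus (a * b) ≤ logPlus a + logPlus b := by
  have he : 1 ≤ exp 1 := one_le_exp zero_le_one
  rw [logPlus, logPlus, logPlus, ← log_mul (by positivity) (by positivity)]
  gcongr
  nlinarith [mul_nonneg ha (exp_pos 1).le, mul_nonneg hb (exp_pos 1).le]

lemma logPlus_le_two_mul_log {β : ℝ} (hβ : exp 1 ≤ β) : logPlus β ≤ 2 * log β := by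
  have he : 2 ≤ exp 1 := by linarith [add_one_le_exp 1]
  rw [logPlus, ← Nat.cast_ofNat, ← log_pow]
  gcongr
  · linarith [exp_pos 1]
  · nlinarith

lemma logPlus_div_le {β u : ℝ} (hβ : exp 1 ≤ β) (hu : 0 ≤ u) :
    logPlus (β / u) ≤ 3 * log β * logPlus (1 / u) := by
  have hβ0 : 0 < β := (exp_pos 1).trans_le hβ
  have hlogβ : 1 ≤ log β := (le_log_iff_exp_le hβ0).2 hβ
  have hL : 1 ≤ logPlus (1 / u) := one_le_logPlus (by positivity)
  have := logPlus_mul_le hβ0.le (one_div_nonneg.2 hu)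
  rw [mul_one_div] at this
  nlinarith [logPlus_le_two_mul_log hβ]

lemma logPlus_one_div_le {u ε : ℝ} (hu : 0 < u) (hu1 : u ≤ 1) (hε : 0 < ε) :
    logPlus (1 / u) ≤ logPlus 1 + u ^ (-ε) / ε := by
  have hlog : log (1 / u) ≤ u ^ (-ε) / ε := by
    simpa [rpow_neg hu.le, inv_rpow hu.le] using log_le_rpow_div (one_div_pos.2 hu).le hε
  have hsplit : logPlus (1 / u) ≤ logPlus 1 + log (1 / u) := by
    rw [logPlus, logPlus, ← log_mul (by positivity) (by positivity)]
    gcongr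
    have : exp 1 ≤ exp 1 * (1 / u) :=
      le_mul_of_one_le_right (exp_pos 1).le (one_le_one_div hu hu1)
    linarith
  linarith

lemma logPlus_one_div_rpow_le {u ε χ : ℝ} (hu : 0 < u) (hε : 0 < ε) (hχ : 0 ≤ χ) :
    logPlus (1 / u) ^ χ ≤ (logPlus 1 + 1 / ε) ^ χ * (u ^ (-(ε * χ)) + 1) := by
  set c := logPlus 1 + 1 / ε
  have hL1 : 1 ≤ logPlus 1 := one_le_logPlus zero_le_one
  have hc : logPlus 1 ≤ c := le_add_of_nonneg_right (by positivity)
  have hL0 : 0 ≤ logPlus (1 / u) := zero_le_one.trans (one_le_logPlus (by positivity))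
  have hc0 : 0 ≤ c := by linarith
  rcases le_total u 1 with hu1 | hu1
  · have hpow : 1 ≤ u ^ (-ε) := one_le_rpow_of_pos_of_le_one_of_nonpos hu hu1 (by linarith)
    have hle : logPlus (1 / u) ≤ c * u ^ (-ε) := by
      have := logPlus_one_div_le hu hu1 hε
      simp only [c, add_mul, one_div_mul_eq_div]
      nlinarith
    calc logPlus (1 / u) ^ χ ≤ (c * u ^ (-ε)) ^ χ := rpow_le_rpow hL0 hle hχ
      _ = c ^ χ * u ^ (-(ε * χ)) := by
        rw [mul_rpow hc0 (by positivity), ← rpow_mul hu.le, neg_mul]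
      _ ≤ c ^ χ * (u ^ (-(ε * χ)) + 1) := by gcongr; linarith
  · have hle : logPlus (1 / u) ≤ c :=
      (logPlus_le_logPlus (by positivity) ((div_le_one hu).2 hu1)).trans hc
    calc logPlus (1 / u) ^ χ ≤ c ^ χ := rpow_le_rpow hL0 hle hχ
      _ ≤ c ^ χ * (u ^ (-(ε * χ)) + 1) := by
        apply le_mul_of_one_le_right (by positivity)
        linarith [rpow_nonneg hu.le (-(ε * χ))]

lemma intervalIntegrable_rpow_neg_mul_exp {q : ℝ} (hq : q < 1) (a b : ℝ) :
    IntervalIntegrable (fun u => u ^ (-q) * exp u) volume a b :=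
  (intervalIntegral.intervalIntegrable_rpow' (by linarith)).mul_continuousOn
    continuous_exp.continuousOn

lemma integral_rpow_neg_mul_exp_le {q c : ℝ} (hq : q < 1) (hc : 0 ≤ c) :
    ∫ u in 0..c, u ^ (-q) * exp u ≤ c ^ (1 - q) / (1 - q) * exp c := by
  calc ∫ u in 0..c, u ^ (-q) * exp u ≤ ∫ u in 0..c, u ^ (-q) * exp c := by
        refine intervalIntegral.integral_mono_on hc (intervalIntegrable_rpow_neg_mul_exp hq 0 c)
          ((intervalIntegral.intervalIntegrable_rpow' (by linarith)).mul_const _) fun u hu => ?_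
        gcongr
        · exact rpow_nonneg hu.1 _
        · exact hu.2
    _ = c ^ (1 - q) / (1 - q) * exp c := by
        rw [intervalIntegral.integral_mul_const, integral_rpow (Or.inl (by linarith)),
          zero_rpow (by linarith), neg_add_eq_sub, sub_zero]

lemma integral_half_rpow_neg_mul_exp_le {q T : ℝ} (hq : 0 ≤ q) (hT : 0 < T) :
    ∫ u in T / 2..T, u ^ (-q) * exp u ≤ (T / 2) ^ (-q) * exp T := by
  have hint : IntervalIntegrable (fun u => u ^ (-q) * exp u) volume (T / 2) T := by
    refine ContinuousOn.intervalIntegrable fun u hu => ?_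
    have : 0 < u := by rw [uIcc_of_le (by linarith)] at hu; linarith [hu.1]
    exact ((continuousAt_rpow_const u (-q) (Or.inl this.ne')).mul
      continuous_exp.continuousAt).continuousWithinAt
  calc ∫ u in T / 2..T, u ^ (-q) * exp u ≤ ∫ u in T / 2..T, (T / 2) ^ (-q) * exp u := by
        refine intervalIntegral.integral_mono_on (by linarith) hint
          (continuous_exp.intervalIntegrable _ _ |>.const_mul _) fun u hu =>
            mul_le_mul_of_nonneg_right (rpow_le_rpow_of_nonpos (by linarith) hu.1 (neg_nonpos.2 hq))
              (exp_pos u).le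
    _ = (T / 2) ^ (-q) * (exp T - exp (T / 2)) := by
        rw [intervalIntegral.integral_const_mul, integral_exp]
    _ ≤ (T / 2) ^ (-q) * exp T :=
        mul_le_mul_of_nonneg_left (by linarith [exp_pos (T / 2)]) (rpow_nonneg (by linarith) _)

def expKernel (p q T : ℝ) : ℝ := T ^ p * exp (-T) * ∫ u in 0..T, u ^ (-q) * exp u

lemma expKernel_le_of_le_one {p q T : ℝ} (hp : 0 ≤ p) (hq : q < 1) (hT : 0 < T) (hT1 : T ≤ 1) :
    expKernel p q T ≤ 1 / (1 - q) := by
  have h1q : 0 < 1 - q := by linarith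
  calc expKernel p q T ≤ T ^ p * exp (-T) * (T ^ (1 - q) / (1 - q) * exp T) := by
        unfold expKernel
        gcongr
        exact integral_rpow_neg_mul_exp_le hq hT.le
    _ = T ^ p * T ^ (1 - q) / (1 - q) := by
        rw [exp_neg]
        field_simp
    _ ≤ 1 / (1 - q) := by
        gcongr
        exact mul_le_one₀ (rpow_le_one hT.le hT1 hp) (rpow_nonneg hT.le _)
          (rpow_le_one hT.le hT1 h1q.le)

lemma expKernel_self_le {q T : ℝ} (hq0 : 0 ≤ q) (hq : q < 1) (hT : 0 < T) :
    expKernel q q T ≤ 2 / (1 - q) + 2 := by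
  have h1q : 0 < 1 - q := by linarith
  have hT2 : 0 < T / 2 := by linarith
  have hnear : T ^ q * exp (-T) * ((T / 2) ^ (-q) * exp T) ≤ 2 := by
    calc T ^ q * exp (-T) * ((T / 2) ^ (-q) * exp T) = (T / (T / 2)) ^ q := by
          rw [div_rpow hT.le hT2.le, rpow_neg hT2.le, exp_neg]
          field_simp
      _ = 2 ^ q := by rw [div_div_cancel₀ hT.ne']
      _ ≤ 2 := by simpa using rpow_le_rpow_of_exponent_le one_le_two hq.le
  have hfar : T ^ q * exp (-T) * ((T / 2) ^ (1 - q) / (1 - q) * exp (T / 2)) ≤ 2 / (1 - q) := by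
    have hTexp : T / 2 ≤ exp (T / 2) := by linarith [add_one_le_exp (T / 2)]
    calc T ^ q * exp (-T) * ((T / 2) ^ (1 - q) / (1 - q) * exp (T / 2))
        ≤ T ^ q * exp (-T) * (T ^ (1 - q) / (1 - q) * exp (T / 2)) := by
          gcongr; linarith
      _ = T ^ q * T ^ (1 - q) * (exp (-T) * exp (T / 2)) / (1 - q) := by ring
      _ = T * exp (-(T / 2)) / (1 - q) := by
          rw [← rpow_add hT, add_sub_cancel, rpow_one, ← exp_add]
          ring_nf
      _ ≤ 2 / (1 - q) := by
          gcongr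
          rw [exp_neg, ← div_eq_mul_inv, div_le_iff₀ (exp_pos _)]
          linarith
  rw [expKernel, ← intervalIntegral.integral_add_adjacent_intervals
    (intervalIntegrable_rpow_neg_mul_exp hq 0 (T / 2)) (intervalIntegrable_rpow_neg_mul_exp hq _ T),
    mul_add]
  gcongr ?_ + ?_
  · exact (mul_le_mul_of_nonneg_left (integral_rpow_neg_mul_exp_le hq hT2.le)
      (by positivity)).trans hfar
  · exact (mul_le_mul_of_nonneg_left (integral_half_rpow_neg_mul_exp_le hq0 hT)
      (by positivity)).trans hnear

lemma expKernel_le {p q T : ℝ} (hp : 0 ≤ p) (hpq : p ≤ q) (hq : q < 1) (hT : 0 < T) :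
    expKernel p q T ≤ 2 / (1 - q) + 2 := by
  have h1q : 0 < 1 - q := by linarith
  rcases le_total T 1 with hT1 | hT1
  · calc expKernel p q T ≤ 1 / (1 - q) := expKernel_le_of_le_one hp hq hT hT1
      _ ≤ 2 / (1 - q) + 2 :=
        (div_le_div_of_nonneg_right one_le_two h1q.le).trans (le_add_of_nonneg_right zero_le_two)
  · refine le_trans ?_ (expKernel_self_le (hp.trans hpq) hq hT)
    have hI : 0 ≤ ∫ u in 0..T, u ^ (-q) * exp u :=
      intervalIntegral.integral_nonneg hT.le fun u hu => by
        have := rpow_nonneg hu.1 (-q); positivity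
    exact mul_le_mul_of_nonneg_right (mul_le_mul_of_nonneg_right
      (rpow_le_rpow_of_exponent_le hT1 hpq) (exp_pos _).le) hI

lemma rpow_mul_exp_neg_mul_integral_eq_rescaled (α : ℝ) (g : ℝ → ℝ) {β t : ℝ} (hβ : 0 < β)
    (ht : 0 ≤ t) :
    t ^ α * exp (-β * t) * ∫ s in 0..t, s ^ (-α) * g (1 / s) * exp (β * s)
      = β⁻¹ * ((β * t) ^ α * exp (-(β * t)) *
          ∫ u in 0..β * t, u ^ (-α) * g (β / u) * exp u) := by
  have hsub := intervalIntegral.smul_integral_comp_mul_left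
    (fun u => u ^ (-α) * g (β / u) * exp u) β (a := 0) (b := t)
  have hcongr : ∫ s in 0..t, (β * s) ^ (-α) * g (β / (β * s)) * exp (β * s)
      = β ^ (-α) * ∫ s in 0..t, s ^ (-α) * g (1 / s) * exp (β * s) := by
    rw [← intervalIntegral.integral_const_mul]
    refine intervalIntegral.integral_congr fun s hs => ?_
    rw [uIcc_of_le ht] at hs
    simp only [mul_rpow hβ.le hs.1, div_mul_cancel_left₀ hβ.ne', one_div]
    ring
  rw [mul_zero, smul_eq_mul, hcongr] at hsub
  rw [← hsub, mul_rpow hβ.le ht, rpow_neg hβ.le, neg_mul]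
  have : β ^ α ≠ 0 := (rpow_pos_of_pos hβ α).ne'
  field_simp

lemma rpow_neg_mul_logPlus_div_rpow_le {α χ ε β u : ℝ} (hχ : 0 ≤ χ) (hε : 0 < ε)
    (hβ : exp 1 ≤ β) (hu : 0 < u) :
    u ^ (-α) * logPlus (β / u) ^ χ
      ≤ (3 * log β) ^ χ * (logPlus 1 + 1 / ε) ^ χ * (u ^ (-(α + ε * χ)) + u ^ (-α)) := by
  have hβ0 : 0 < β := (exp_pos 1).trans_le hβ
  have hlogβ : 0 ≤ 3 * log β :=
    mul_nonneg zero_le_three (log_nonneg (one_le_exp zero_le_one |>.trans hβ))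
  have hL : 0 ≤ logPlus (1 / u) := zero_le_one.trans (one_le_logPlus (by positivity))
  have hlog : logPlus (β / u) ^ χ ≤ (3 * log β) ^ χ * logPlus (1 / u) ^ χ := by
    rw [← mul_rpow hlogβ hL]
    exact rpow_le_rpow (zero_le_one.trans (one_le_logPlus (by positivity)))
      (logPlus_div_le hβ hu.le) hχ
  calc u ^ (-α) * logPlus (β / u) ^ χ
      ≤ u ^ (-α) * ((3 * log β) ^ χ * ((logPlus 1 + 1 / ε) ^ χ * (u ^ (-(ε * χ)) + 1))) :=
        mul_le_mul_of_nonneg_left (hlog.trans (mul_le_mul_of_nonneg_left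
          (logPlus_one_div_rpow_le hu hε hχ) (rpow_nonneg hlogβ _))) (rpow_nonneg hu.le _)
    _ = (3 * log β) ^ χ * (logPlus 1 + 1 / ε) ^ χ * (u ^ (-(α + ε * χ)) + u ^ (-α)) := by
        rw [neg_add, rpow_add hu]
        ring

lemma integral_rpow_neg_mul_logPlus_div_le {α χ ε β T : ℝ} (hχ : 0 ≤ χ) (hε : 0 < ε)
    (hαε : α + ε * χ < 1) (hβ : exp 1 ≤ β) (hT : 0 ≤ T) :
    ∫ u in 0..T, u ^ (-α) * logPlus (β / u) ^ χ * exp u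
      ≤ (3 * log β) ^ χ * (logPlus 1 + 1 / ε) ^ χ *
          ((∫ u in 0..T, u ^ (-(α + ε * χ)) * exp u) + ∫ u in 0..T, u ^ (-α) * exp u) := by
  have h1 := intervalIntegrable_rpow_neg_mul_exp hαε 0 T
  have h2 := intervalIntegrable_rpow_neg_mul_exp (q := α) (by nlinarith) 0 T
  rw [← intervalIntegral.integral_add h1 h2, ← intervalIntegral.integral_const_mul]
  refine intervalIntegral.integral_mono_of_nonneg_on hT ((h1.add h2).const_mul _)
    (fun u hu => ?_) (fun u hu => ?_)
  · have := rpow_nonneg (zero_le_one.trans (one_le_logPlus (div_nonneg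
      ((exp_pos 1).le.trans hβ) hu.1.le))) χ
    have := rpow_nonneg hu.1.le (-α)
    positivity
  · rw [← add_mul, ← mul_assoc]
    exact mul_le_mul_of_nonneg_right (rpow_neg_mul_logPlus_div_rpow_le hχ hε hβ hu.1)
      (exp_pos u).le

lemma rpow_mul_exp_neg_mul_integral_logPlus_div_le {α χ ε β T : ℝ} (hα : 0 ≤ α) (hχ : 0 ≤ χ)
    (hε : 0 < ε) (hαε : α + ε * χ < 1) (hβ : exp 1 ≤ β) (hT : 0 < T) :
    T ^ α * exp (-T) * ∫ u in 0..T, u ^ (-α) * logPlus (β / u) ^ χ * exp u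
      ≤ 3 ^ χ * (logPlus 1 + 1 / ε) ^ χ *
          ((2 / (1 - (α + ε * χ)) + 2) + (2 / (1 - α) + 2)) * log β ^ χ := by
  have hεχ : 0 ≤ ε * χ := mul_nonneg hε.le hχ
  have hlogβ : 0 ≤ log β := log_nonneg (one_le_exp zero_le_one |>.trans hβ)
  have hc : 0 ≤ (3 * log β) ^ χ * (logPlus 1 + 1 / ε) ^ χ := by
    have : 1 ≤ logPlus 1 := one_le_logPlus zero_le_one
    exact mul_nonneg (rpow_nonneg (by linarith) _) (rpow_nonneg (by positivity) _)
  calc T ^ α * exp (-T) * ∫ u in 0..T, u ^ (-α) * logPlus (β / u) ^ χ * exp u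
      ≤ T ^ α * exp (-T) * ((3 * log β) ^ χ * (logPlus 1 + 1 / ε) ^ χ *
          ((∫ u in 0..T, u ^ (-(α + ε * χ)) * exp u) + ∫ u in 0..T, u ^ (-α) * exp u)) :=
        mul_le_mul_of_nonneg_left (integral_rpow_neg_mul_logPlus_div_le hχ hε hαε hβ hT.le)
          (by positivity)
    _ = (3 * log β) ^ χ * (logPlus 1 + 1 / ε) ^ χ *
          (expKernel α (α + ε * χ) T + expKernel α α T) := by
        unfold expKernel; ring
    _ ≤ (3 * log β) ^ χ * (logPlus 1 + 1 / ε) ^ χ *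
          ((2 / (1 - (α + ε * χ)) + 2) + (2 / (1 - α) + 2)) := by
        gcongr
        · exact expKernel_le hα (by linarith) hαε hT
        · exact expKernel_le hα le_rfl (by linarith) hT
    _ = _ := by rw [mul_rpow zero_le_three hlogβ]; ring

theorem weighted_log_integral_bound_large_beta
    (α χ : ℝ) (hα : α ∈ Set.Ioo (0 : ℝ) 1) (hχ : 0 ≤ χ) :
    ∃ C : ℝ, 0 < C ∧ ∀ t β : ℝ, 0 < t → Real.exp 1 ≤ β →
      t ^ α * Real.exp (-β * t) *
        (∫ s in (0 : ℝ)..t, s ^ (-α) * (logPlus (1 / s)) ^ χ * Real.exp (β * s))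
        ≤ C * (Real.log β) ^ χ / β := by
  obtain ⟨hα0, hα1⟩ := hα
  obtain ⟨ε, hε, hεχ⟩ := exists_pos_mul_lt (sub_pos.2 hα1) χ
  have hαε : α + ε * χ < 1 := by linarith
  have hL1 : 1 ≤ logPlus 1 := one_le_logPlus zero_le_one
  refine ⟨3 ^ χ * (logPlus 1 + 1 / ε) ^ χ * ((2 / (1 - (α + ε * χ)) + 2) + (2 / (1 - α) + 2)),
    by have := rpow_pos_of_pos (by positivity : 0 < logPlus 1 + 1 / ε) χ; positivity, ?_⟩
  intro t β ht hβ
  have hβ0 : 0 < β := (exp_pos 1).trans_le hβ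
  rw [rpow_mul_exp_neg_mul_integral_eq_rescaled α (fun x => logPlus x ^ χ) hβ0 ht.le]
  calc β⁻¹ * _ ≤ β⁻¹ * _ := mul_le_mul_of_nonneg_left
        (rpow_mul_exp_neg_mul_integral_logPlus_div_le hα0.le hχ hε hαε hβ (by positivity))
        (inv_nonneg.2 hβ0.le)
    _ = _ := by ring

end
end
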